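/- For all 0 ≤ k ≤ n, the fibonomial coefficient binom(n,k)_F = F_n!/(F_k!·F_{n-k}!) is a positive integer; that is, F_k!·F_{n-k}! divides F_n!. -/
import Mathlib


/-- The Fibonacci factorial `F_n! = F_n · F_{n-1} · ⋯ · F_1`, with `F_0! = 1`. -/
def fibFact : ℕ → ℕ
  | 0 => 1
  | n + 1 => Nat.fib (n + 1) * fibFact n

/-- The fibonomial coefficient `binom(n,k)_F = F_n!/(F_k!·F_{n-k}!)` for `0 ≤ k ≤ n`,
and `0` otherwise. Indices are integers so that negative arguments make sense. -/
def fibBinom (n k : ℤ) : ℕ :=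
  if 0 ≤ k ∧ k ≤ n then fibFact n.toNat / (fibFact k.toNat * fibFact (n - k).toNat) else 0

lemma fibFact_pos (n : ℕ) : 0 < fibFact n := by
  induction n with
  | zero => simp [fibFact]
  | succ n ih => exact Nat.mul_pos (Nat.fib_pos.mpr (Nat.succ_pos n)) ih

lemma fibFact_dvd : ∀ n k, k ≤ n → fibFact k * fibFact (n - k) ∣ fibFact n := by
  intro n
  induction n with
  | zero => intro k hk; interval_cases k; simp [fibFact]
  | succ n ih =>
    intro k hk
    rcases Nat.eq_zero_or_pos k with rfl | hk1
    · simp [fibFact]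
    rcases eq_or_lt_of_le hk with rfl | hlt
    · simp [fibFact]
    have hk' : k ≤ n := Nat.lt_succ_iff.mp hlt
    obtain ⟨j, rfl⟩ : ∃ j, k = j + 1 := ⟨k - 1, by omega⟩
    have hj : j + 1 ≤ n := hk'
    have hsplit : n + 1 = j + (n - j) + 1 := by omega
    have hfib : Nat.fib (n + 1)
        = Nat.fib j * Nat.fib (n - j) + Nat.fib (j + 1) * Nat.fib (n - j + 1) := by
      conv_lhs => rw [hsplit]
      exact Nat.fib_add j (n - j)
    have hexp : fibFact (n + 1) = Nat.fib (n + 1) * fibFact n := rfl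
    have hsub : n + 1 - (j + 1) = n - j := by omega
    rw [hsub, hexp, hfib, Nat.add_mul]
    apply dvd_add
    · -- term: fib j * fib (n-j) * fibFact n
      have h1 : fibFact (j + 1) * fibFact (n - (j + 1)) ∣ fibFact n := ih (j + 1) hj
      have hnj : n - j = (n - (j + 1)) + 1 := by omega
      have : fibFact (j + 1) * fibFact (n - j)
          = Nat.fib (n - j) * (fibFact (j + 1) * fibFact (n - (j + 1))) := by
        rw [hnj]; show fibFact (j+1) * (Nat.fib (n - (j+1) + 1) * fibFact (n - (j+1))) = _
        ring
      rw [this, mul_comm (Nat.fib j) (Nat.fib (n - j))]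
      exact mul_dvd_mul (dvd_mul_right _ _) h1
    · -- term: fib (j+1) * fib (n-j+1) * fibFact n
      have h2 : fibFact j * fibFact (n - j) ∣ fibFact n := ih j (by omega)
      have heq : fibFact (j + 1) * fibFact (n - j)
          = Nat.fib (j + 1) * (fibFact j * fibFact (n - j)) := by
        show Nat.fib (j+1) * fibFact j * fibFact (n - j) = _; ring
      rw [heq, mul_assoc]
      exact mul_dvd_mul_left _ (h2.trans (dvd_mul_left _ _))

theorem fibBinom_pos_int (n k : ℕ) (hkn : k ≤ n) :
    fibFact k * fibFact (n - k) ∣ fibFact n ∧ 0 < fibBinom n k := by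
  have hdvd := fibFact_dvd n k hkn
  refine ⟨hdvd, ?_⟩
  unfold fibBinom
  rw [if_pos ⟨Int.natCast_nonneg k, Int.ofNat_le.mpr hkn⟩]
  rw [Int.toNat_natCast, Int.toNat_natCast, ← Nat.cast_sub hkn, Int.toNat_natCast]
  exact Nat.div_pos (Nat.le_of_dvd (fibFact_pos n) hdvd)
    (Nat.mul_pos (fibFact_pos k) (fibFact_pos (n - k)))
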